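/- Let E ⊆ ℝ^N × ℝ be a closed set and for t ∈ ℝ set E(t) := {x ∈ ℝ^N : (x,t) ∈ E}. Then the function (x,t) ↦ dist_{φ°}(x, E(t)), with values in [0, +∞] (equal to +∞ when E(t) = ∅), is lower semicontinuous on ℝ^N × ℝ. -/

import Mathlib

open MeasureTheory Set Filter Topology
open scoped RealInnerProductSpace ENNReal

noncomputable section

/-- An anisotropy (norm) on `ℝ^N`: convex, even, positively 1-homogeneous and
positive away from the origin. -/
structure IsAnisoNorm {N : ℕ} (φ : EuclideanSpace ℝ (Fin N) → ℝ) : Prop where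
  convexOn : ConvexOn ℝ Set.univ φ
  even : ∀ x, φ (-x) = φ x
  homog : ∀ (c : ℝ) (x : EuclideanSpace ℝ (Fin N)), 0 ≤ c → φ (c • x) = c * φ x
  pos : ∀ x : EuclideanSpace ℝ (Fin N), x ≠ 0 → 0 < φ x

/-- The polar norm `φ°(ξ) = sup {ξ·η : φ(η) ≤ 1}`. -/
noncomputable def polar {N : ℕ} (φ : EuclideanSpace ℝ (Fin N) → ℝ)
    (ξ : EuclideanSpace ℝ (Fin N)) : ℝ :=
  sSup ((fun η => ⟪ξ, η⟫) '' {η : EuclideanSpace ℝ (Fin N) | φ η ≤ 1})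

/-- The subdifferential `∂φ(p) = {v : ∀ q, φ(q) ≥ φ(p) + v·(q-p)}`. -/
def subdiff {N : ℕ} (φ : EuclideanSpace ℝ (Fin N) → ℝ) (p : EuclideanSpace ℝ (Fin N)) :
    Set (EuclideanSpace ℝ (Fin N)) :=
  {v | ∀ q, φ p + ⟪v, q - p⟫ ≤ φ q}


/-- Distance induced by the polar norm `φ°` from a point to a set, with value `∞`
for the empty set. -/
noncomputable def edistP {N : ℕ} (φ : EuclideanSpace ℝ (Fin N) → ℝ)
    (x : EuclideanSpace ℝ (Fin N)) (F : Set (EuclideanSpace ℝ (Fin N))) : ℝ≥0∞ :=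
  ⨅ y ∈ F, ENNReal.ofReal (polar φ (x - y))

/-- The time-`t` slice of a space-time set. -/
def timeSlice {N : ℕ} (E : Set (EuclideanSpace ℝ (Fin N) × ℝ)) (t : ℝ) :
    Set (EuclideanSpace ℝ (Fin N)) := {x | (x, t) ∈ E}

/-! The polar norm `φ°` is the support function of the unit ball `{φ ≤ 1}`. This ball is
bounded, so `φ°` is Lipschitz, and it contains a Euclidean ball, so `φ°` dominates a multiple
of the Euclidean norm and its sublevel sets are bounded. Lower semicontinuity of the distance
then amounts to closedness of the sets `{(x, t) : ∃ y ∈ E(t), φ°(x - y) ≤ r}`: along a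
convergent sequence in such a set the witnesses `y` stay bounded, and a limit of a subsequence
of them is a witness for the limit point because `E` is closed. -/

def supportFunction {F : Type*} [NormedAddCommGroup F] [InnerProductSpace ℝ F] (B : Set F)
    (ξ : F) : ℝ :=
  sSup ((fun η => ⟪ξ, η⟫) '' B)

section SupportFunction

variable {F : Type*} [NormedAddCommGroup F] [InnerProductSpace ℝ F] {B : Set F}

lemma le_supportFunction (hB : Bornology.IsBounded B) (ξ : F) {η : F} (hη : η ∈ B) :
    ⟪ξ, η⟫ ≤ supportFunction B ξ :=
  le_csSup ((innerSL ℝ ξ).lipschitz.isBounded_image hB).bddAbove ⟨η, hη, rfl⟩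

lemma supportFunction_le_add_mul_dist {R : ℝ} (hB : B ⊆ Metric.closedBall 0 R)
    (hne : B.Nonempty) (ξ ζ : F) :
    supportFunction B ξ ≤ supportFunction B ζ + R * dist ξ ζ := by
  refine csSup_le (hne.image _) ?_
  rintro _ ⟨η, hη, rfl⟩
  have hηR : ‖η‖ ≤ R := by simpa using hB hη
  calc ⟪ξ, η⟫ = ⟪ζ, η⟫ + ⟪ξ - ζ, η⟫ := by rw [inner_sub_left]; ring
    _ ≤ supportFunction B ζ + ‖ξ - ζ‖ * ‖η‖ :=
        add_le_add (le_supportFunction (Metric.isBounded_closedBall.subset hB) ζ hη)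
          (real_inner_le_norm _ _)
    _ ≤ supportFunction B ζ + R * dist ξ ζ := by
        rw [dist_eq_norm, mul_comm R]
        gcongr

lemma continuous_supportFunction (hB : Bornology.IsBounded B) (hne : B.Nonempty) :
    Continuous (supportFunction B) := by
  obtain ⟨R, hR⟩ := hB.subset_closedBall 0
  refine (LipschitzWith.of_le_add_mul' R fun ξ ζ => ?_).continuous
  exact supportFunction_le_add_mul_dist hR hne ξ ζ

lemma mul_norm_le_supportFunction (hB : Bornology.IsBounded B) {δ : ℝ} (hδ : 0 ≤ δ)
    (hδB : Metric.closedBall 0 δ ⊆ B) (ξ : F) :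
    δ * ‖ξ‖ ≤ supportFunction B ξ := by
  rcases eq_or_ne ξ 0 with rfl | hξ
  · simpa using le_supportFunction hB 0 (hδB (Metric.mem_closedBall_self hδ))
  have hξ' : 0 < ‖ξ‖ := norm_pos_iff.2 hξ
  have hη : (δ / ‖ξ‖) • ξ ∈ B := by
    refine hδB (mem_closedBall_zero_iff.2 (le_of_eq ?_))
    rw [norm_smul, Real.norm_eq_abs, abs_div, abs_norm, abs_of_nonneg hδ,
      div_mul_cancel₀ _ hξ'.ne']
  calc δ * ‖ξ‖ = ⟪ξ, (δ / ‖ξ‖) • ξ⟫ := by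
        rw [real_inner_smul_right, real_inner_self_eq_norm_sq]
        field_simp
    _ ≤ supportFunction B ξ := le_supportFunction hB ξ hη

end SupportFunction

namespace IsAnisoNorm

variable {N : ℕ} {φ : EuclideanSpace ℝ (Fin N) → ℝ}

lemma map_zero (hφ : IsAnisoNorm φ) : φ 0 = 0 := by
  simpa using hφ.homog 0 0 le_rfl

protected lemma continuous (hφ : IsAnisoNorm φ) : Continuous φ :=
  hφ.convexOn.locallyLipschitz.continuous

lemma exists_pos_mul_norm_le (hφ : IsAnisoNorm φ) : ∃ m > 0, ∀ x, m * ‖x‖ ≤ φ x := by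
  obtain ⟨m, hm, hmS⟩ := (isCompact_sphere (0 : EuclideanSpace ℝ (Fin N)) 1).exists_forall_le'
    hφ.continuous.continuousOn fun x hx => hφ.pos x (ne_zero_of_mem_unit_sphere ⟨x, hx⟩)
  refine ⟨m, hm, fun x => ?_⟩
  rcases eq_or_ne x 0 with rfl | hx
  · simp [hφ.map_zero]
  have hx' : 0 < ‖x‖ := norm_pos_iff.2 hx
  have hunit : ‖x‖⁻¹ • x ∈ Metric.sphere (0 : EuclideanSpace ℝ (Fin N)) 1 := by
    rw [mem_sphere_zero_iff_norm, norm_smul, norm_inv, norm_norm, inv_mul_cancel₀ hx'.ne']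
  have := hmS _ hunit
  rw [hφ.homog _ _ (inv_nonneg.2 hx'.le), le_inv_mul_iff₀ hx'] at this
  linarith

lemma isBounded_unitBall (hφ : IsAnisoNorm φ) : Bornology.IsBounded {η | φ η ≤ 1} := by
  obtain ⟨m, hm, hmφ⟩ := hφ.exists_pos_mul_norm_le
  refine (Metric.isBounded_closedBall (x := 0) (r := m⁻¹)).subset fun η hη => ?_
  rw [mem_closedBall_zero_iff, ← one_div, le_div_iff₀ hm]
  linarith [hmφ η, show φ η ≤ 1 from hη]

lemma exists_closedBall_subset_unitBall (hφ : IsAnisoNorm φ) :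
    ∃ δ > 0, Metric.closedBall 0 δ ⊆ {η | φ η ≤ 1} := by
  have h : {η | φ η < 1} ∈ 𝓝 (0 : EuclideanSpace ℝ (Fin N)) :=
    hφ.continuous.continuousAt.preimage_mem_nhds (Iio_mem_nhds (by simp [hφ.map_zero]))
  obtain ⟨δ, hδ, hδφ⟩ := Metric.nhds_basis_closedBall.mem_iff.1 h
  exact ⟨δ, hδ, hδφ.trans (Set.ofPred_subset_ofPred.2 fun _ => le_of_lt)⟩

lemma polar_eq_supportFunction : polar φ = supportFunction {η | φ η ≤ 1} := rfl

lemma continuous_polar (hφ : IsAnisoNorm φ) : Continuous (polar φ) :=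
  polar_eq_supportFunction ▸
    continuous_supportFunction hφ.isBounded_unitBall ⟨0, by simp [hφ.map_zero]⟩

lemma isBounded_setOf_polar_le (hφ : IsAnisoNorm φ) (r : ℝ) :
    Bornology.IsBounded {ξ | polar φ ξ ≤ r} := by
  obtain ⟨δ, hδ, hδB⟩ := hφ.exists_closedBall_subset_unitBall
  refine (Metric.isBounded_closedBall (x := 0) (r := r / δ)).subset fun ξ hξ => ?_
  rw [mem_closedBall_zero_iff, le_div_iff₀ hδ, mul_comm]
  rw [polar_eq_supportFunction] at hξ
  exact (mul_norm_le_supportFunction hφ.isBounded_unitBall hδ.le hδB ξ).trans hξ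

end IsAnisoNorm

section Slices

open scoped Pointwise

variable {X T : Type*} [NormedAddCommGroup X] [ProperSpace X] [TopologicalSpace T]
  [FirstCountableTopology T] {f : X → ℝ} {E : Set (X × T)}

lemma isClosed_setOf_exists_slice_le (hf : LowerSemicontinuous f)
    (hf_bdd : ∀ r, Bornology.IsBounded {x | f x ≤ r}) (hE : IsClosed E) (r : ℝ) :
    IsClosed {q : X × T | ∃ y, (y, q.2) ∈ E ∧ f (q.1 - y) ≤ r} := by
  refine IsSeqClosed.isClosed fun u q hu hlim => ?_
  choose y hyE hyf using hu
  have hx : Tendsto (fun n => (u n).1) atTop (𝓝 q.1) := (continuous_fst.tendsto q).comp hlim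
  have ht : Tendsto (fun n => (u n).2) atTop (𝓝 q.2) := (continuous_snd.tendsto q).comp hlim
  have hy_bdd : Bornology.IsBounded (range (fun n => (u n).1) - {x | f x ≤ r}) :=
    isBounded_sub (Metric.isBounded_range_of_tendsto _ hx) (hf_bdd r)
  obtain ⟨a, -, ψ, hψ, hya⟩ := tendsto_subseq_of_bounded hy_bdd fun n =>
    ⟨_, mem_range_self n, _, hyf n, sub_sub_cancel _ _⟩
  refine ⟨a, hE.mem_of_tendsto (hya.prodMk_nhds (ht.comp hψ.tendsto_atTop))
    (Eventually.of_forall fun n => hyE (ψ n)), ?_⟩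
  exact (hf.isClosed_preimage r).mem_of_tendsto ((hx.comp hψ.tendsto_atTop).sub hya)
    (Eventually.of_forall fun n => hyf (ψ n))

theorem lowerSemicontinuous_iInf_slice (hf : LowerSemicontinuous f)
    (hf_bdd : ∀ r, Bornology.IsBounded {x | f x ≤ r}) (hE : IsClosed E) :
    LowerSemicontinuous fun q : X × T =>
      ⨅ y ∈ {y | (y, q.2) ∈ E}, ENNReal.ofReal (f (q.1 - y)) := by
  intro p c hc
  obtain ⟨r, -, hcr, hrp⟩ := ENNReal.lt_iff_exists_real_btwn.1 hc
  have hp : p ∉ {q : X × T | ∃ y, (y, q.2) ∈ E ∧ f (q.1 - y) ≤ r} := by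
    rintro ⟨y, hy, hyr⟩
    exact hrp.not_ge (iInf₂_le_of_le y hy (ENNReal.ofReal_le_ofReal hyr))
  filter_upwards [(isClosed_setOf_exists_slice_le hf hf_bdd hE r).isOpen_compl.mem_nhds hp]
    with q hq
  refine hcr.trans_le (le_iInf₂ fun y hy => ENNReal.ofReal_le_ofReal ?_)
  exact le_of_not_ge fun hyr => hq ⟨y, hy, hyr⟩

end Slices

theorem statement16_general {N : ℕ} (φ : EuclideanSpace ℝ (Fin N) → ℝ)
    (hφ : IsAnisoNorm φ) (E : Set (EuclideanSpace ℝ (Fin N) × ℝ)) (hE : IsClosed E) :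
    LowerSemicontinuous fun p : EuclideanSpace ℝ (Fin N) × ℝ =>
      edistP φ p.1 (timeSlice E p.2) :=
  lowerSemicontinuous_iInf_slice hφ.continuous_polar.lowerSemicontinuous
    hφ.isBounded_setOf_polar_le hE

/-- For a closed space-time set `E`, the function `(x,t) ↦ dist_{φ°}(x, E(t))` with
values in `[0,∞]` is lower semicontinuous. -/
theorem statement16 {N : ℕ} (hN : 0 < N) (φ : EuclideanSpace ℝ (Fin N) → ℝ)
    (hφ : IsAnisoNorm φ) (E : Set (EuclideanSpace ℝ (Fin N) × ℝ)) (hE : IsClosed E) :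
    LowerSemicontinuous fun p : EuclideanSpace ℝ (Fin N) × ℝ =>
      edistP φ p.1 (timeSlice E p.2) :=
  statement16_general φ hφ E hE
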